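/- Consider the six vertices of a regular hexagon inscribed in the unit circle in the Euclidean plane, p_k = (cos(kπ/3), sin(kπ/3)) for k = 0, 1, 2, 3, 4, 5, and set A = {p_0, p_1}, B = {p_2, p_3}, C = {p_4, p_5}. Then the normalized Chamfer distance satisfies Ch_N(C, A ∪ B) = 1 while Ch_N(C, A) = Ch_N(C, B) = (1 + √3)/2; in particular Ch_N(C, A ∪ B) < min(Ch_N(C, A), Ch_N(C, B)), so normalized Chamfer-linkage is not a reducible linkage function. -/

import Mathlib

noncomputable instance : DecidableEq (EuclideanSpace ℝ (Fin 2)) := Classical.decEq _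

/-- The Chamfer distance from a finite set `A` to a finite nonempty set `B`:
`Ch(A, B) = Σ_{a ∈ A} min_{b ∈ B} d(a, b)`. -/
noncomputable def chamfer {X : Type*} [MetricSpace X] (A B : Finset X)
    (hB : B.Nonempty) : ℝ :=
  ∑ a ∈ A, B.inf' hB fun b => dist a b

/-- The normalized Chamfer distance: `Ch_N(A, B) = Ch(A, B) / |A|`. -/
noncomputable def chamferN {X : Type*} [MetricSpace X] (A B : Finset X)
    (hB : B.Nonempty) : ℝ :=
  chamfer A B hB / A.card

/-- The `k`-th vertex of the regular hexagon inscribed in the unit circle: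
`p_k = (cos(kπ/3), sin(kπ/3))`. -/
noncomputable def hexP (k : ℕ) : EuclideanSpace ℝ (Fin 2) :=
  (WithLp.equiv 2 (Fin 2 → ℝ)).symm ![Real.cos (k * Real.pi / 3), Real.sin (k * Real.pi / 3)]

noncomputable def pt (x y : ℝ) : EuclideanSpace ℝ (Fin 2) :=
  (WithLp.equiv 2 (Fin 2 → ℝ)).symm ![x, y]

lemma dist_pt (x1 y1 x2 y2 : ℝ) :
    dist (pt x1 y1) (pt x2 y2) = Real.sqrt ((x1-x2)^2 + (y1-y2)^2) := by
  rw [EuclideanSpace.dist_eq]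
  simp only [pt, Fin.sum_univ_two]
  norm_num [Real.dist_eq, sq_abs, WithLp.equiv_symm_apply, PiLp.toLp_apply]


lemma hex0 : hexP 0 = pt 1 0 := by
  unfold hexP pt; norm_num

lemma hex1 : hexP 1 = pt (1/2) (Real.sqrt 3 / 2) := by
  unfold hexP pt
  norm_num [Real.cos_pi_div_three, Real.sin_pi_div_three]

lemma hex2 : hexP 2 = pt (-(1/2)) (Real.sqrt 3 / 2) := by
  unfold hexP pt
  have h : (2:ℕ) * Real.pi / 3 = Real.pi - Real.pi / 3 := by push_cast; ring
  rw [h, Real.cos_pi_sub, Real.sin_pi_sub, Real.cos_pi_div_three, Real.sin_pi_div_three]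

lemma hex3 : hexP 3 = pt (-1) 0 := by
  unfold hexP pt
  have h : (3:ℕ) * Real.pi / 3 = Real.pi := by push_cast; ring
  rw [h, Real.cos_pi, Real.sin_pi]

lemma hex4 : hexP 4 = pt (-(1/2)) (-(Real.sqrt 3 / 2)) := by
  unfold hexP pt
  have h : (4:ℕ) * Real.pi / 3 = Real.pi - (-(Real.pi / 3)) := by push_cast; ring
  rw [h, Real.cos_pi_sub, Real.sin_pi_sub, Real.cos_neg, Real.sin_neg,
    Real.cos_pi_div_three, Real.sin_pi_div_three]

lemma hex5 : hexP 5 = pt (1/2) (-(Real.sqrt 3 / 2)) := by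
  unfold hexP pt
  have h : (5:ℕ) * Real.pi / 3 = 2 * Real.pi - Real.pi / 3 := by push_cast; ring
  rw [h, Real.cos_two_pi_sub, Real.sin_two_pi_sub, Real.cos_pi_div_three, Real.sin_pi_div_three]

lemma sqrt3_sq : Real.sqrt 3 ^ 2 = 3 := Real.sq_sqrt (by norm_num)
lemma sqrt3_ge : (1:ℝ) ≤ Real.sqrt 3 := by
  nlinarith [sqrt3_sq, Real.sqrt_nonneg 3]
lemma sqrt3_le : Real.sqrt 3 ≤ 2 := by
  nlinarith [sqrt3_sq, Real.sqrt_nonneg 3]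

lemma d40 : dist (hexP 4) (hexP 0) = Real.sqrt 3 := by
  rw [hex4, hex0, dist_pt]; congr 1; nlinarith [sqrt3_sq]
lemma d41 : dist (hexP 4) (hexP 1) = 2 := by
  rw [hex4, hex1, dist_pt]
  rw [show (-(1/2) - 1/2)^2 + (-(Real.sqrt 3/2) - Real.sqrt 3/2)^2 = 4 by nlinarith [sqrt3_sq]]
  rw [show (4:ℝ) = 2^2 by norm_num, Real.sqrt_sq (by norm_num)]
lemma d42 : dist (hexP 4) (hexP 2) = Real.sqrt 3 := by
  rw [hex4, hex2, dist_pt]; congr 1; nlinarith [sqrt3_sq]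
lemma d43 : dist (hexP 4) (hexP 3) = 1 := by
  rw [hex4, hex3, dist_pt]
  rw [show (-(1/2) - -1)^2 + (-(Real.sqrt 3/2) - 0)^2 = 1 by nlinarith [sqrt3_sq]]
  exact Real.sqrt_one
lemma d50 : dist (hexP 5) (hexP 0) = 1 := by
  rw [hex5, hex0, dist_pt]
  rw [show (1/2 - 1)^2 + (-(Real.sqrt 3/2) - 0)^2 = 1 by nlinarith [sqrt3_sq]]
  exact Real.sqrt_one
lemma d51 : dist (hexP 5) (hexP 1) = Real.sqrt 3 := by
  rw [hex5, hex1, dist_pt]; congr 1; nlinarith [sqrt3_sq]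
lemma d52 : dist (hexP 5) (hexP 2) = 2 := by
  rw [hex5, hex2, dist_pt]
  rw [show (1/2 - -(1/2))^2 + (-(Real.sqrt 3/2) - Real.sqrt 3/2)^2 = 4 by nlinarith [sqrt3_sq]]
  rw [show (4:ℝ) = 2^2 by norm_num, Real.sqrt_sq (by norm_num)]
lemma d53 : dist (hexP 5) (hexP 3) = Real.sqrt 3 := by
  rw [hex5, hex3, dist_pt]; congr 1; nlinarith [sqrt3_sq]

lemma hex45_ne : hexP 4 ≠ hexP 5 := by
  rw [hex4, hex5]
  intro he
  have := congrArg (fun p : EuclideanSpace ℝ (Fin 2) => p 0) he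
  simp [pt] at this
  norm_num at this


lemma inf'_pair {X : Type*} [DecidableEq X] (a b : X) (f : X → ℝ) (h : ({a, b} : Finset X).Nonempty) :
    ({a, b} : Finset X).inf' h f = min (f a) (f b) := by
  rw [Finset.inf'_insert (H := Finset.singleton_nonempty b), Finset.inf'_singleton]

lemma inf'_quad {X : Type*} [DecidableEq X] (a b c d : X) (f : X → ℝ)
    (h : ({a, b, c, d} : Finset X).Nonempty) :
    ({a, b, c, d} : Finset X).inf' h f = min (f a) (min (f b) (min (f c) (f d))) := by
  rw [Finset.inf'_insert (H := Finset.insert_nonempty b {c, d}),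
    Finset.inf'_insert (H := Finset.insert_nonempty c {d}),
    Finset.inf'_insert (H := Finset.singleton_nonempty d), Finset.inf'_singleton]

lemma hexU : ({hexP 0, hexP 1} ∪ {hexP 2, hexP 3} : Finset (EuclideanSpace ℝ (Fin 2)))
    = {hexP 0, hexP 1, hexP 2, hexP 3} := by
  ext x; simp [Finset.mem_union, Finset.mem_insert]; tauto

set_option maxHeartbeats 1000000 in
/-- With `A = {p₀, p₁}`, `B = {p₂, p₃}`, `C = {p₄, p₅}` the vertices of a regular hexagon
inscribed in the unit circle, `Ch_N(C, A ∪ B) = 1` while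
`Ch_N(C, A) = Ch_N(C, B) = (1 + √3)/2`; in particular
`Ch_N(C, A ∪ B) < min (Ch_N(C, A)) (Ch_N(C, B))`, so normalized Chamfer-linkage is not a
reducible linkage function. -/
theorem chamferN_not_reducible :
    chamferN {hexP 4, hexP 5} ({hexP 0, hexP 1} ∪ {hexP 2, hexP 3})
        ((Finset.insert_nonempty _ _).inl) = 1 ∧
    chamferN {hexP 4, hexP 5} {hexP 0, hexP 1} (Finset.insert_nonempty _ _)
        = (1 + Real.sqrt 3) / 2 ∧
    chamferN {hexP 4, hexP 5} {hexP 2, hexP 3} (Finset.insert_nonempty _ _)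
        = (1 + Real.sqrt 3) / 2 ∧
    chamferN {hexP 4, hexP 5} ({hexP 0, hexP 1} ∪ {hexP 2, hexP 3})
        ((Finset.insert_nonempty _ _).inl)
      < min (chamferN {hexP 4, hexP 5} {hexP 0, hexP 1} (Finset.insert_nonempty _ _))
          (chamferN {hexP 4, hexP 5} {hexP 2, hexP 3} (Finset.insert_nonempty _ _)) := by
  have hne := hex45_ne
  have hcard : (({hexP 4, hexP 5} : Finset (EuclideanSpace ℝ (Fin 2))).card : ℝ) = 2 := by
    rw [Finset.card_pair hne]; norm_num
  have h1 : chamferN {hexP 4, hexP 5} ({hexP 0, hexP 1} ∪ {hexP 2, hexP 3})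
      ((Finset.insert_nonempty _ _).inl) = 1 := by
    unfold chamferN chamfer
    rw [hcard]
    simp only [hexU]
    rw [Finset.sum_pair hne, inf'_quad, inf'_quad, d40, d41, d42, d43, d50, d51, d52, d53]
    rw [min_eq_right sqrt3_ge, min_eq_right (by norm_num : (1:ℝ) ≤ 2), min_eq_right sqrt3_ge,
      min_eq_left (le_min sqrt3_ge (le_min one_le_two sqrt3_ge))]
    norm_num
  have h2 : chamferN {hexP 4, hexP 5} {hexP 0, hexP 1} (Finset.insert_nonempty _ _)
      = (1 + Real.sqrt 3) / 2 := by
    unfold chamferN chamfer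
    rw [hcard, Finset.sum_pair hne, inf'_pair, inf'_pair, d40, d41, d50, d51,
      min_eq_left sqrt3_le, min_eq_left sqrt3_ge]
    ring
  have h3 : chamferN {hexP 4, hexP 5} {hexP 2, hexP 3} (Finset.insert_nonempty _ _)
      = (1 + Real.sqrt 3) / 2 := by
    unfold chamferN chamfer
    rw [hcard, Finset.sum_pair hne, inf'_pair, inf'_pair, d42, d43, d52, d53,
      min_eq_right sqrt3_ge, min_eq_right sqrt3_le]
  refine ⟨h1, h2, h3, ?_⟩
  rw [h1, h2, h3, min_self]
  nlinarith [sqrt3_ge, sqrt3_sq, Real.sqrt_nonneg 3]
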